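/- If f is a nonconstant multilinear multivariate polynomial over a field (each variable occurs with degree at most 1 in f) and f is indecomposable, then f is irreducible. -/

import Mathlib

/-- A polynomial is decomposable if it is a product of two nonconstant polynomials
depending on disjoint sets of variables. -/
def Decomposable {F σ : Type*} [Field F] [DecidableEq σ] (f : MvPolynomial σ F) : Prop :=
  ∃ g h : MvPolynomial σ F,
    (¬ ∃ c : F, g = MvPolynomial.C c) ∧ (¬ ∃ c : F, h = MvPolynomial.C c) ∧
    Disjoint g.vars h.vars ∧ f = g * h

/-!
A factorisation `f = a * b` into non-units has nonconstant factors, and since the degree in each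
variable is additive over a domain, multilinearity of `f` forces `a` and `b` to involve disjoint
sets of variables: `f` would be decomposable.
-/

namespace MvPolynomial

variable {σ : Type*}

theorem disjoint_vars_of_degreeOf_mul_le_one {R : Type*} [CommSemiring R] [NoZeroDivisors R]
    {p q : MvPolynomial σ R} (hp : p ≠ 0) (hq : q ≠ 0) (h : ∀ i, (p * q).degreeOf i ≤ 1) :
    Disjoint p.vars q.vars := by
  refine Finset.disjoint_left.mpr fun i hip hiq => ?_
  rw [mem_vars_iff_degreeOf_ne_zero] at hip hiq
  have hi := h i
  rw [degreeOf_mul_eq hp hq] at hi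
  omega

theorem not_exists_eq_C_of_not_isUnit {F : Type*} [Field F] {p : MvPolynomial σ F}
    (hp0 : p ≠ 0) (hp : ¬ IsUnit p) : ¬ ∃ c : F, p = C c := by
  rintro ⟨c, rfl⟩
  exact hp ((isUnit_iff_ne_zero.mpr fun hc => hp0 (by rw [hc, map_zero])).map C)

end MvPolynomial

open MvPolynomial

theorem multilinear_indecomposable_irreducible {F σ : Type*} [Field F] [DecidableEq σ]
    (f : MvPolynomial σ F)
    (hnc : ¬ ∃ c : F, f = MvPolynomial.C c)
    (hml : ∀ i : σ, f.degreeOf i ≤ 1)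
    (hind : ¬ Decomposable f) :
    Irreducible f := by
  have hf0 : f ≠ 0 := fun h => hnc ⟨0, by rw [h, map_zero]⟩
  refine ⟨fun hu => hnc ?_, fun a b hab => ?_⟩
  · obtain ⟨r, -, rfl⟩ := isUnit_iff_eq_C_of_isReduced.mp hu
    exact ⟨r, rfl⟩
  · by_contra! hnu
    have ha0 : a ≠ 0 := by rintro rfl; exact hf0 (by rw [hab, zero_mul])
    have hb0 : b ≠ 0 := by rintro rfl; exact hf0 (by rw [hab, mul_zero])
    exact hind ⟨a, b, not_exists_eq_C_of_not_isUnit ha0 hnu.1,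
      not_exists_eq_C_of_not_isUnit hb0 hnu.2,
      disjoint_vars_of_degreeOf_mul_le_one ha0 hb0 (hab ▸ hml), hab⟩
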